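/- For every θ : {1,…,n} → ℝ and every V : {1,…,n} → ℝ with V_i ≠ 0 for all i, the real 2n×2n matrix J is nonsingular (det J ≠ 0). (This is Theorem 2 of the paper: under the stated network and load conditions, system trajectories never encounter the impasse surface.) -/

import Mathlib

/-!
A kernel vector `(x, y)` of `J` gives `u = x + i y` with `W u + conj (Z u) = 0`. Conjugating,
multiplying by `u` and summing turns this into `w* Y₁ w + ∑ Z_ii u_i² = 0` for `w = D conj u`,
whose imaginary part is `w* B w + ∑ h_i |w_i|² + ∑ V_i² b_i (x_i² + (β_i - 1) y_i²) = 0`.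
The loads contribute `≤ 0`, so `w* (B + diag h) w ≥ 0`. As `B` is the Laplacian of a connected
network, `w* B w = -½ ∑ B_ij |w_i - w_j|² ≤ 0` vanishes only for constant `w`, and `h ≤ 0` with
`h < 0` at a generator bus then forces `w = 0`, hence `u = 0`.
-/

open Complex Finset Matrix
open scoped ComplexConjugate

theorem forall_of_exists_cut {ι : Type*} [Fintype ι] {R : ι → ι → Prop}
    (hR : ∀ S : Finset ι, S.Nonempty → S ≠ univ → ∃ i ∈ S, ∃ j ∉ S, R i j)
    {P : ι → Prop} (hP : ∀ i j, R i j → P i → P j) {i₀ : ι} (hi₀ : P i₀) (i : ι) : P i := by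
  classical
  by_contra hi
  obtain ⟨j, hj, k, hk, hjk⟩ := hR (univ.filter P) ⟨i₀, by simpa using hi₀⟩
    fun h => hi (by simpa using eq_univ_iff_forall.1 h i)
  simp only [mem_filter, mem_univ, true_and] at hj hk
  exact hk (hP j k hjk hj)

section Laplacian

variable {ι : Type*} {B : Matrix ι ι ℝ}

theorem mul_normSq_sub_nonneg (hoff : ∀ i j, i ≠ j → 0 ≤ B i j) (w : ι → ℂ) (i j : ι) :
    0 ≤ B i j * normSq (w i - w j) := by
  rcases eq_or_ne i j with rfl | hij
  · simp
  · exact mul_nonneg (hoff i j hij) (normSq_nonneg _)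

variable [Fintype ι]

theorem sum_apply_eq_zero_of_diag_eq_neg_sum [DecidableEq ι]
    (hdiag : ∀ i, B i i = -∑ j ∈ univ.erase i, B i j) (i : ι) : ∑ j, B i j = 0 := by
  rw [← add_sum_erase _ _ (mem_univ i), hdiag]
  ring

theorem re_star_dotProduct_map_ofReal_mulVec (w : ι → ℂ) :
    (star w ⬝ᵥ B.map ofReal *ᵥ w).re = ∑ i, ∑ j, B i j * (w i * conj (w j)).re := by
  simp only [dotProduct, mulVec, mul_sum, re_sum, map_apply, Pi.star_apply, RCLike.star_def]
  refine sum_congr rfl fun i _ => sum_congr rfl fun j _ => ?_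
  simp only [mul_re, mul_im, ofReal_re, ofReal_im, conj_re, conj_im]
  ring

theorem two_mul_re_star_dotProduct_map_ofReal_mulVec (hB : B.IsSymm) (hrow : ∀ i, ∑ j, B i j = 0)
    (w : ι → ℂ) :
    2 * (star w ⬝ᵥ B.map ofReal *ᵥ w).re = -∑ i, ∑ j, B i j * normSq (w i - w j) := by
  have hcol : ∀ j, ∑ i, B i j = 0 := fun j => by simpa only [hB.apply] using hrow j
  have hleft : ∑ i, ∑ j, B i j * normSq (w i) = 0 := by
    simp only [← sum_mul, hrow, zero_mul, sum_const_zero]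
  have hright : ∑ i, ∑ j, B i j * normSq (w j) = 0 := by
    rw [sum_comm]; simp only [← sum_mul, hcol, zero_mul, sum_const_zero]
  have hterm : ∀ i j, B i j * normSq (w i - w j) = B i j * normSq (w i) + B i j * normSq (w j)
      - 2 * (B i j * (w i * conj (w j)).re) := fun i j => by rw [normSq_sub]; ring
  simp only [hterm, sum_sub_distrib, sum_add_distrib, hleft, hright, ← mul_sum,
    re_star_dotProduct_map_ofReal_mulVec]
  ring

theorem re_star_dotProduct_map_ofReal_mulVec_nonpos (hB : B.IsSymm) (hrow : ∀ i, ∑ j, B i j = 0)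
    (hoff : ∀ i j, i ≠ j → 0 ≤ B i j) (w : ι → ℂ) :
    (star w ⬝ᵥ B.map ofReal *ᵥ w).re ≤ 0 := by
  have := sum_nonneg fun i (_ : i ∈ univ) => sum_nonneg fun j (_ : j ∈ univ) =>
    mul_normSq_sub_nonneg hoff w i j
  linarith [two_mul_re_star_dotProduct_map_ofReal_mulVec hB hrow w]

theorem eq_of_re_star_dotProduct_map_ofReal_mulVec_eq_zero (hB : B.IsSymm)
    (hrow : ∀ i, ∑ j, B i j = 0) (hoff : ∀ i j, i ≠ j → 0 ≤ B i j) {w : ι → ℂ}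
    (hw : (star w ⬝ᵥ B.map ofReal *ᵥ w).re = 0) {i j : ι} (hij : 0 < B i j) : w i = w j := by
  have hsum : ∑ i, ∑ j, B i j * normSq (w i - w j) = 0 := by
    linarith [two_mul_re_star_dotProduct_map_ofReal_mulVec hB hrow w]
  rw [sum_eq_zero_iff_of_nonneg fun i _ => sum_nonneg fun j _ => mul_normSq_sub_nonneg hoff w i j]
    at hsum
  have hterm := (sum_eq_zero_iff_of_nonneg fun j _ => mul_normSq_sub_nonneg hoff w i j).1
    (hsum i (mem_univ i)) j (mem_univ j)
  rw [mul_eq_zero, normSq_eq_zero, sub_eq_zero] at hterm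
  exact hterm.resolve_left hij.ne'

theorem eq_zero_of_nonneg_re_star_dotProduct_map_ofReal_mulVec_add (hB : B.IsSymm)
    (hrow : ∀ i, ∑ j, B i j = 0) (hoff : ∀ i j, i ≠ j → 0 ≤ B i j)
    (hconn : ∀ S : Finset ι, S.Nonempty → S ≠ univ → ∃ i ∈ S, ∃ j ∉ S, 0 < B i j)
    {h : ι → ℝ} (hh : ∀ i, h i ≤ 0) {i₀ : ι} (hi₀ : h i₀ < 0) {w : ι → ℂ}
    (hw : 0 ≤ (star w ⬝ᵥ B.map ofReal *ᵥ w).re + ∑ i, h i * normSq (w i)) : w = 0 := by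
  have hterm_nonpos : ∀ i ∈ univ, h i * normSq (w i) ≤ 0 :=
    fun i _ => mul_nonpos_of_nonpos_of_nonneg (hh i) (normSq_nonneg _)
  have hQ := re_star_dotProduct_map_ofReal_mulVec_nonpos hB hrow hoff w
  have hH := sum_nonpos hterm_nonpos
  have hw₀ : w i₀ = 0 := by
    have := (sum_eq_zero_iff_of_nonpos hterm_nonpos).1 (by linarith) i₀ (mem_univ _)
    simpa [hi₀.ne] using this
  have hQ₀ : (star w ⬝ᵥ B.map ofReal *ᵥ w).re = 0 := by linarith
  funext i
  exact forall_of_exists_cut hconn (P := fun i => w i = 0) (fun j k hjk hj =>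
    (eq_of_re_star_dotProduct_map_ofReal_mulVec_eq_zero hB hrow hoff hQ₀ hjk).symm.trans hj) hw₀ i

end Laplacian

section PowerFlow

variable {ι : Type*} [Fintype ι]

theorem mulVec_add_star_mulVec_eq_zero_of_fromBlocks_mulVec_eq_zero {W Z : Matrix ι ι ℂ}
    {p : ι ⊕ ι → ℝ}
    (hp : fromBlocks (of fun i j => (W i j).im - (Z i j).im) (of fun i j => (W i j).re - (Z i j).re)
      (of fun i j => -(W i j).re - (Z i j).re) (of fun i j => (W i j).im + (Z i j).im) *ᵥ p = 0) :
    W *ᵥ (fun i => ⟨p (.inl i), p (.inr i)⟩) + star (Z *ᵥ fun i => ⟨p (.inl i), p (.inr i)⟩)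
      = 0 := by
  rw [fromBlocks_mulVec] at hp
  funext i
  have him := congrFun hp (.inl i)
  have hre := congrFun hp (.inr i)
  simp only [Sum.elim_inl, Sum.elim_inr, Pi.add_apply, mulVec, dotProduct, Function.comp_apply,
    of_apply, Pi.zero_apply, sub_mul, add_mul, neg_mul, sum_sub_distrib, sum_add_distrib,
    sum_neg_distrib] at him hre
  apply Complex.ext <;>
  simp only [Pi.add_apply, Pi.star_apply, mulVec, dotProduct, RCLike.star_def, add_re, add_im,
    conj_re, conj_im, re_sum, im_sum, mul_re, mul_im, Pi.zero_apply, zero_re, zero_im,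
    sum_sub_distrib, sum_add_distrib] <;>
  linarith

theorem star_dotProduct_mulVec_add_sum_eq_zero [DecidableEq ι] (d z : ι → ℂ) (Y : Matrix ι ι ℂ)
    {u : ι → ℂ}
    (hu : (diagonal d * Y.map conj * (diagonal d).map conj) *ᵥ u + star (diagonal z *ᵥ u) = 0) :
    star (fun i => d i * conj (u i)) ⬝ᵥ Y *ᵥ (fun i => d i * conj (u i)) + ∑ i, z i * u i ^ 2
      = 0 := by
  set w : ι → ℂ := fun i => d i * conj (u i)
  have hDu : (diagonal fun i => conj (d i)) *ᵥ u = star w := by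
    funext i; simp [mulVec_diagonal, w, mul_comm]
  have hYw : Y.map conj *ᵥ star w = star (Y *ᵥ w) := by
    funext i; simp [mulVec, dotProduct]
  have hrow : ∀ i, conj (d i) * (Y *ᵥ w) i + z i * u i = 0 := by
    intro i
    simpa [← mulVec_mulVec, mulVec_diagonal, diagonal_map, hDu, hYw] using
      congrArg conj (congrFun hu i)
  calc _ = ∑ i, u i * (conj (d i) * (Y *ᵥ w) i + z i * u i) := by
        simp only [dotProduct, Pi.star_apply, RCLike.star_def, w, map_mul, conj_conj,
          ← sum_add_distrib]
        exact sum_congr rfl fun i _ => by ring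
    _ = 0 := by simp [hrow]

theorem im_star_dotProduct_I_smul_add_diagonal_mulVec [DecidableEq ι] (B : Matrix ι ι ℝ)
    (a s : ι → ℝ) (w : ι → ℂ) :
    (star w ⬝ᵥ (I • B.map ofReal + diagonal fun i => (a i : ℂ) + I * (s i : ℂ)) *ᵥ w).im
      = (star w ⬝ᵥ B.map ofReal *ᵥ w).re + ∑ i, s i * normSq (w i) := by
  rw [add_mulVec, dotProduct_add, smul_mulVec, dotProduct_smul, add_im, smul_eq_mul, I_mul_im]
  congr 1
  simp only [dotProduct, mulVec_diagonal, im_sum, Pi.star_apply, RCLike.star_def]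
  refine sum_congr rfl fun i _ => ?_
  rw [mul_left_comm, ← normSq_eq_conj_mul_self]
  simp

theorem load_term_nonpos {b β : ℝ} (hb : b ≤ 0) (hβ : 1 ≤ β) (V : ℝ) (u : ℂ) :
    β * b / 2 * (V ^ 2 * normSq u) + (I * ((1 - β / 2) * b : ℝ) * V ^ 2 * u ^ 2).im ≤ 0 := by
  have : β * b / 2 * (V ^ 2 * normSq u) + (I * ((1 - β / 2) * b : ℝ) * V ^ 2 * u ^ 2).im
      = V ^ 2 * (b * (u.re ^ 2 + (β - 1) * u.im ^ 2)) := by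
    simp only [pow_two, normSq_apply, mul_re, mul_im, I_re, I_im, ofReal_re, ofReal_im]
    ring
  rw [this]
  exact mul_nonpos_of_nonneg_of_nonpos (sq_nonneg V)
    (mul_nonpos_of_nonpos_of_nonneg hb (by nlinarith [sq_nonneg u.re, sq_nonneg u.im]))

end PowerFlow

theorem impasse_surface_never_encountered_general
    (n : ℕ)
    (Vt : Finset (Fin n)) (hVt : Vt.Nonempty)
    (B : Matrix (Fin n) (Fin n) ℝ) (hBsym : B.IsSymm)
    (hBoff : ∀ i j, i ≠ j → 0 ≤ B i j)
    (hBdiag : ∀ i, B i i = -∑ j ∈ Finset.univ.erase i, B i j)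
    (hBconn : ∀ S : Finset (Fin n), S.Nonempty → S ≠ Finset.univ →
      ∃ i ∈ S, ∃ j ∉ S, 0 < B i j)
    (g h c b β : Fin n → ℝ)
    (hh : ∀ i ∈ Vt, h i < 0) (hh0 : ∀ i ∉ Vt, h i = 0)
    (hb : ∀ i, b i ≤ 0) (hβ : ∀ i, 1 ≤ β i)
    (Y₁ Y₂ : Matrix (Fin n) (Fin n) ℂ)
    (hY₁ : Y₁ = Complex.I • B.map (fun x => (x : ℂ)) +
      Matrix.diagonal (fun i => ((g i + c i : ℝ) : ℂ) +
        Complex.I * ((h i + β i * b i / 2 : ℝ) : ℂ)))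
    (hY₂ : Y₂ = Matrix.diagonal (fun i => Complex.I * (((1 - β i / 2) * b i : ℝ) : ℂ)))
    (θ V : Fin n → ℝ) (hV : ∀ i, V i ≠ 0)
    (D W Z : Matrix (Fin n) (Fin n) ℂ)
    (hD : D = Matrix.diagonal fun i => (V i : ℂ) * Complex.exp (Complex.I * (θ i : ℂ)))
    (hW : W = D * Y₁.map (starRingEnd ℂ) * D.map (starRingEnd ℂ))
    (hZ : Z = Matrix.diagonal fun i => Y₂ i i * (V i : ℂ) ^ 2)
    (E F M N : Matrix (Fin n) (Fin n) ℝ)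
    (hE : E = fun i j => (W i j).im - (Z i j).im)
    (hF : F = fun i j => (W i j).re - (Z i j).re)
    (hM : M = fun i j => -(W i j).re - (Z i j).re)
    (hN : N = fun i j => (W i j).im + (Z i j).im)
    (J : Matrix (Fin n ⊕ Fin n) (Fin n ⊕ Fin n) ℝ)
    (hJ : J = Matrix.fromBlocks E F M N) :
    J.det ≠ 0 := by
  intro hdet
  obtain ⟨p, hp0, hJp⟩ := exists_mulVec_eq_zero_iff.2 hdet
  set u : Fin n → ℂ := fun i => ⟨p (.inl i), p (.inr i)⟩
  set d : Fin n → ℂ := fun i => V i * exp (I * θ i)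
  set w : Fin n → ℂ := fun i => d i * conj (u i)
  have hker : W *ᵥ u + star (Z *ᵥ u) = 0 := by
    subst hJ hE hF hM hN
    exact mulVec_add_star_mulVec_eq_zero_of_fromBlocks_mulVec_eq_zero hJp
  rw [hW, hD, hZ] at hker
  have hquad : star w ⬝ᵥ Y₁ *ᵥ w + ∑ i, Y₂ i i * V i ^ 2 * u i ^ 2 = 0 :=
    star_dotProduct_mulVec_add_sum_eq_zero d _ Y₁ hker
  have hnormSq : ∀ i, normSq (w i) = V i ^ 2 * normSq (u i) := fun i => by
    rw [normSq_mul, normSq_mul, normSq_conj, normSq_ofReal, normSq_eq_norm_sq (exp _),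
      norm_exp_I_mul_ofReal]
    ring
  have hh_nonpos : ∀ i, h i ≤ 0 := fun i => by
    by_cases hi : i ∈ Vt
    exacts [(hh i hi).le, (hh0 i hi).le]
  have hground : 0 ≤ (star w ⬝ᵥ B.map ofReal *ᵥ w).re + ∑ i, h i * normSq (w i) := by
    have him := congrArg im hquad
    rw [add_im, hY₁, im_star_dotProduct_I_smul_add_diagonal_mulVec, im_sum, hY₂] at him
    have := sum_nonpos fun i (_ : i ∈ univ) => load_term_nonpos (hb i) (hβ i) (V i) (u i)
    simp only [diagonal_apply_eq, hnormSq, add_mul, sum_add_distrib, zero_im] at him this ⊢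
    linarith
  obtain ⟨i₀, hi₀⟩ := hVt
  have hw : w = 0 := eq_zero_of_nonneg_re_star_dotProduct_map_ofReal_mulVec_add hBsym
    (sum_apply_eq_zero_of_diag_eq_neg_sum hBdiag) hBoff hBconn hh_nonpos (hh i₀ hi₀) hground
  have hu : u = 0 := funext fun i => by simpa [w, d, hV i, exp_ne_zero] using congrFun hw i
  exact hp0 (funext (Sum.rec (fun i => congrArg re (congrFun hu i))
    fun i => congrArg im (congrFun hu i)))

theorem impasse_surface_never_encountered
    (n : ℕ) (hn : 1 ≤ n)
    (Vt : Finset (Fin n)) (hVt : Vt.Nonempty)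
    (B : Matrix (Fin n) (Fin n) ℝ) (hBsym : B.IsSymm)
    (hBoff : ∀ i j, i ≠ j → 0 ≤ B i j)
    (hBdiag : ∀ i, B i i = -∑ j ∈ Finset.univ.erase i, B i j)
    (hBconn : ∀ S : Finset (Fin n), S.Nonempty → S ≠ Finset.univ →
      ∃ i ∈ S, ∃ j ∉ S, 0 < B i j)
    (g h c b β : Fin n → ℝ)
    (hg : ∀ i, 0 ≤ g i) (hg0 : ∀ i ∉ Vt, g i = 0)
    (hh : ∀ i ∈ Vt, h i < 0) (hh0 : ∀ i ∉ Vt, h i = 0)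
    (hb : ∀ i, b i ≤ 0) (hβ : ∀ i, 1 ≤ β i)
    (Y₁ Y₂ : Matrix (Fin n) (Fin n) ℂ)
    (hY₁ : Y₁ = Complex.I • B.map (fun x => (x : ℂ)) +
      Matrix.diagonal (fun i => ((g i + c i : ℝ) : ℂ) +
        Complex.I * ((h i + β i * b i / 2 : ℝ) : ℂ)))
    (hY₂ : Y₂ = Matrix.diagonal (fun i => Complex.I * (((1 - β i / 2) * b i : ℝ) : ℂ)))
    (θ V : Fin n → ℝ) (hV : ∀ i, V i ≠ 0)
    (D W Z : Matrix (Fin n) (Fin n) ℂ)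
    (hD : D = Matrix.diagonal fun i => (V i : ℂ) * Complex.exp (Complex.I * (θ i : ℂ)))
    (hW : W = D * Y₁.map (starRingEnd ℂ) * D.map (starRingEnd ℂ))
    (hZ : Z = Matrix.diagonal fun i => Y₂ i i * (V i : ℂ) ^ 2)
    (E F M N : Matrix (Fin n) (Fin n) ℝ)
    (hE : E = fun i j => (W i j).im - (Z i j).im)
    (hF : F = fun i j => (W i j).re - (Z i j).re)
    (hM : M = fun i j => -(W i j).re - (Z i j).re)
    (hN : N = fun i j => (W i j).im + (Z i j).im)
    (J : Matrix (Fin n ⊕ Fin n) (Fin n ⊕ Fin n) ℝ)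
    (hJ : J = Matrix.fromBlocks E F M N) :
    J.det ≠ 0 :=
  impasse_surface_never_encountered_general n Vt hVt B hBsym hBoff hBdiag hBconn g h c b β hh hh0 hb
    hβ Y₁ Y₂ hY₁ hY₂ θ V hV D W Z hD hW hZ E F M N hE hF hM hN J hJ
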